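/- Let T be a terminal d-polytope. If μ_s(T_n) = s/2 holds for every n ≤ d and every s ∈ {1,…,n}, then μ_i(T) = i/2 for all i ∈ {1,…,d}. -/

import Mathlib

open scoped Pointwise

/-- The `i`-th covering minimum of `K` with respect to a lattice given as a set `L`. -/
noncomputable def covMin {E : Type*} [AddCommGroup E] [Module ℝ E]
    (i : ℕ) (K L : Set E) : ℝ :=
  sInf {μ : ℝ | 0 ≤ μ ∧ ∀ U : AffineSubspace ℝ E, (U : Set E).Nonempty →
    Module.finrank ℝ U.direction = Module.finrank ℝ E - i →
    ((μ • K + L) ∩ (U : Set E)).Nonempty}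

/-- The integer lattice `ℤ^d` inside `ℝ^d`. -/
def intLat (d : ℕ) : Set (Fin d → ℝ) := {x | ∀ j, ∃ m : ℤ, x j = (m : ℝ)}

/-- The standard terminal simplex `T_n = conv(-𝟙_n, e_1, …, e_n) ⊆ ℝ^n`. -/
def stdTerminal (n : ℕ) : Set (Fin n → ℝ) :=
  convexHull ℝ (insert (fun _ => (-1 : ℝ)) (Set.range fun j : Fin n => Pi.single j (1 : ℝ)))

/-- The translate by `u` of the standard terminal simplex supported on the coordinate
block `B`: `conv({u - 𝟙_B} ∪ {u + e_j : j ∈ B})`. -/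
def blockTerminal {n : ℕ} (B : Finset (Fin n)) (u : Fin n → ℝ) : Set (Fin n → ℝ) :=
  convexHull ℝ (insert (u - ∑ j ∈ B, Pi.single j (1 : ℝ))
    ((fun j => u + Pi.single j (1 : ℝ)) '' (B : Set (Fin n))))

/-- A terminal `n`-polytope: a direct sum, along a partition of the coordinates into
nonempty blocks, of (integral) translates of standard terminal simplices, each summand
containing the origin.  Since all summands are convex and contain `0`, the iterated
direct sum equals the convex hull of their union. -/
def IsTerminalPolytope {n : ℕ} (T : Set (Fin n → ℝ)) : Prop :=
  ∃ (k : ℕ) (B : Fin k → Finset (Fin n)) (u : Fin k → Fin n → ℤ),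
    (∀ b, (B b).Nonempty) ∧
    (∀ j : Fin n, ∃ b, j ∈ B b) ∧
    (∀ b b', b ≠ b' → Disjoint (B b) (B b')) ∧
    (∀ b, ∀ j, j ∉ B b → u b j = 0) ∧
    (∀ b, (0 : Fin n → ℝ) ∈ blockTerminal (B b) (fun j => (u b j : ℝ))) ∧
    T = convexHull ℝ (⋃ b, blockTerminal (B b) (fun j => (u b j : ℝ)))

/-!
Write `T` as the convex hull of translated standard terminal simplices `S_b ∋ 0`, one on each
block `B_b` of a partition of the coordinates.

Upper bound: let `U` have codimension `i` and treat the blocks one at a time. If the projection of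
`U` to the block `B_b` has codimension `s_b`, the hypothesis on `T_{|B_b|}` gives a point of `U`
whose `B_b`-part lies in `(s_b / 2 + ε_b) S_b + ℤ^d`. Continue inside the fibre of `U` through that
point over its projection; it has codimension `i - s_b` in the remaining blocks. Since `T` is convex
and contains `0` and every `S_b`, the `B_b`-parts add up to a point of `U` in
`(i / 2 + ∑ b, ε_b) T + ℤ^d`.

Lower bound: for `μ < i / 2` split `i = ∑ b, i_b` with `i_b ≤ |B_b|`, and `μ = ∑ b, μ_b` with
`μ_b < i_b / 2` whenever `i_b ≠ 0`. Take blockwise subspaces of codimension `i_b` that miss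
`μ_b S_b + ℤ^{B_b}`. Their product has codimension `i` and misses `μ T + ℤ^d`: every point of
`μ T` has `B_b`-parts in `c_b S_b` with `∑ b, c_b = μ`, so `c_b ≤ μ_b` for some `b` with `i_b ≠ 0`.
-/

section Convex

variable {E : Type*} [AddCommGroup E] [Module ℝ E] {K : Set E}

theorem Convex.smul_set_subset_smul_set (hK : Convex ℝ K) (h0 : (0 : E) ∈ K) {a b : ℝ}
    (ha : 0 ≤ a) (hab : a ≤ b) : a • K ⊆ b • K := by
  rw [show b = a + (b - a) by ring, hK.add_smul ha (sub_nonneg.2 hab)]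
  exact fun x hx => ⟨x, hx, 0, ⟨0, h0, smul_zero _⟩, add_zero x⟩

theorem Convex.add_mem_smul_add {L : AddSubmonoid E} (hK : Convex ℝ K) {a b : ℝ}
    (ha : 0 ≤ a) (hb : 0 ≤ b) {x y : E} (hx : x ∈ a • K + (L : Set E))
    (hy : y ∈ b • K + (L : Set E)) : x + y ∈ (a + b) • K + (L : Set E) := by
  obtain ⟨p, hp, l, hl, rfl⟩ := hx
  obtain ⟨q, hq, m, hm, rfl⟩ := hy
  rw [hK.add_smul ha hb]
  exact ⟨p + q, Set.add_mem_add hp hq, l + m, L.add_mem hl hm, (add_add_add_comm p l q m).symm⟩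

theorem exists_sum_smul_of_mem_convexHull_iUnion {ι : Type*} [Fintype ι] {S : ι → Set E}
    (hS : ∀ i, Convex ℝ (S i)) (hne : ∀ i, (S i).Nonempty) {x : E}
    (hx : x ∈ convexHull ℝ (⋃ i, S i)) :
    ∃ c : ι → ℝ, (∀ i, 0 ≤ c i) ∧ ∑ i, c i = 1 ∧
      ∃ z : ι → E, (∀ i, z i ∈ S i) ∧ x = ∑ i, c i • z i := by
  classical
  choose z₀ hz₀ using hne
  refine convexHull_min (t := {x | ∃ c : ι → ℝ, (∀ i, 0 ≤ c i) ∧ ∑ i, c i = 1 ∧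
      ∃ z : ι → E, (∀ i, z i ∈ S i) ∧ x = ∑ i, c i • z i}) ?_ ?_ hx
  · refine Set.iUnion_subset fun i y hy => ⟨Pi.single i 1, fun j => ?_, by simp, ?_⟩
    · by_cases h : j = i <;> simp [h]
    · refine ⟨Function.update z₀ i y, fun j => ?_, ?_⟩
      · by_cases h : j = i
        · subst h; simpa using hy
        · simpa [h] using hz₀ j
      · simp [Pi.single_apply]
  · rintro _ ⟨c, hc, hc1, z, hz, rfl⟩ _ ⟨c', hc', hc1', z', hz', rfl⟩ a b ha hb hab
    have hcomb : ∀ i, ∃ w ∈ S i, (a * c i + b * c' i) • w = a • c i • z i + b • c' i • z' i :=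
      fun i => by
        simpa only [smul_smul] using (hS i).exists_mem_add_smul_eq (hz i) (hz' i)
          (mul_nonneg ha (hc i)) (mul_nonneg hb (hc' i))
    choose w hw hweq using hcomb
    refine ⟨fun i => a * c i + b * c' i, fun i => by have := hc i; have := hc' i; positivity,
      ?_, w, hw, ?_⟩
    · rw [Finset.sum_add_distrib, ← Finset.mul_sum, ← Finset.mul_sum, hc1, hc1', mul_one, mul_one,
        hab]
    · simp only [hweq, Finset.smul_sum, Finset.sum_add_distrib]

end Convex

section CoveringMinimum

variable {E : Type*} [AddCommGroup E] [Module ℝ E]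

def covMinSet (i : ℕ) (K L : Set E) : Set ℝ :=
  {μ : ℝ | 0 ≤ μ ∧ ∀ U : AffineSubspace ℝ E, (U : Set E).Nonempty →
    Module.finrank ℝ U.direction = Module.finrank ℝ E - i →
    ((μ • K + L) ∩ (U : Set E)).Nonempty}

theorem covMin_eq_sInf (i : ℕ) (K L : Set E) : covMin i K L = sInf (covMinSet i K L) := rfl

theorem bddBelow_covMinSet (i : ℕ) (K L : Set E) : BddBelow (covMinSet i K L) :=
  ⟨0, fun _ hμ => hμ.1⟩

theorem covMin_eq_of_forall_add_mem_of_forall_le {i : ℕ} {K L : Set E} {v : ℝ}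
    (hle : ∀ ε > 0, v + ε ∈ covMinSet i K L) (hge : ∀ μ ∈ covMinSet i K L, v ≤ μ) :
    covMin i K L = v :=
  le_antisymm
    (le_of_forall_pos_le_add fun ε hε => csInf_le (bddBelow_covMinSet i K L) (hle ε hε))
    (le_csInf ⟨v + 1, hle 1 one_pos⟩ hge)

theorem exists_mem_covMinSet_lt {i : ℕ} {K L : Set E} {v : ℝ} (h : covMin i K L = v)
    (hv : 0 < v) {ε : ℝ} (hε : 0 < ε) : ∃ μ ∈ covMinSet i K L, μ < v + ε := by
  have hne : (covMinSet i K L).Nonempty := by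
    by_contra hempty
    rw [covMin_eq_sInf, Set.not_nonempty_iff_eq_empty.1 hempty, Real.sInf_empty] at h
    exact hv.ne h
  rw [covMin_eq_sInf] at h
  exact exists_lt_of_csInf_lt hne (h ▸ lt_add_of_pos_right v hε)

theorem exists_affineSubspace_of_lt_covMin {i : ℕ} {K L : Set E} {μ : ℝ} (hμ0 : 0 ≤ μ)
    (hμ : μ < covMin i K L) :
    ∃ U : AffineSubspace ℝ E, (U : Set E).Nonempty ∧
      Module.finrank ℝ U.direction = Module.finrank ℝ E - i ∧
      Disjoint (μ • K + L) (U : Set E) := by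
  have hnot : μ ∉ covMinSet i K L := fun hmem =>
    (csInf_le (bddBelow_covMinSet i K L) hmem).not_gt hμ
  simp only [covMinSet, Set.mem_ofPred_eq, not_and, not_forall, Set.not_nonempty_iff_eq_empty,
    exists_prop] at hnot
  obtain ⟨U, hU, hrank, hempty⟩ := hnot hμ0
  exact ⟨U, hU, hrank, Set.disjoint_iff_inter_eq_empty.2 hempty⟩

/-- In codimension `0` the only affine subspace is the whole space. -/
theorem zero_mem_covMinSet_zero [FiniteDimensional ℝ E] {K L : Set E} (hK : K.Nonempty)
    (hL : (0 : E) ∈ L) : (0 : ℝ) ∈ covMinSet 0 K L := by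
  refine ⟨le_rfl, fun U hU hrank => ⟨0, ?_, ?_⟩⟩
  · rw [Set.zero_smul_set hK]
    exact ⟨0, rfl, 0, hL, add_zero 0⟩
  · have htop : U.direction = ⊤ := Submodule.eq_top_of_finrank_eq (by simpa using hrank)
    rw [(AffineSubspace.direction_eq_top_iff_of_nonempty hU).1 htop]
    trivial

end CoveringMinimum

def intLatAddSubgroup (d : ℕ) : AddSubgroup (Fin d → ℝ) where
  carrier := intLat d
  add_mem' {x y} hx hy j := by
    obtain ⟨a, ha⟩ := hx j
    obtain ⟨b, hb⟩ := hy j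
    exact ⟨a + b, by simp [ha, hb]⟩
  zero_mem' _ := ⟨0, by simp⟩
  neg_mem' {x} hx j := by
    obtain ⟨a, ha⟩ := hx j
    exact ⟨-a, by simp [ha]⟩

section BlockCoordinates

variable {d : ℕ}

/-- Extension by zero from the coordinates of `B`, numbered by `B.equivFin`. -/
noncomputable def blockEmbed (B : Finset (Fin d)) : (Fin B.card → ℝ) →ₗ[ℝ] (Fin d → ℝ) where
  toFun v j := if h : j ∈ B then v (B.equivFin ⟨j, h⟩) else 0
  map_add' v w := by funext j; by_cases h : j ∈ B <;> simp [h]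
  map_smul' c v := by funext j; by_cases h : j ∈ B <;> simp [h]

noncomputable def blockRestrict (B : Finset (Fin d)) : (Fin d → ℝ) →ₗ[ℝ] (Fin B.card → ℝ) :=
  LinearMap.funLeft ℝ ℝ fun t => (B.equivFin.symm t : Fin d)

variable {B : Finset (Fin d)}

theorem blockEmbed_apply_of_mem (v : Fin B.card → ℝ) {j : Fin d} (h : j ∈ B) :
    blockEmbed B v j = v (B.equivFin ⟨j, h⟩) := dif_pos h

theorem blockEmbed_apply_of_notMem (v : Fin B.card → ℝ) {j : Fin d} (h : j ∉ B) :
    blockEmbed B v j = 0 := dif_neg h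

theorem blockRestrict_apply_equivFin (x : Fin d → ℝ) {j : Fin d} (h : j ∈ B) :
    blockRestrict B x (B.equivFin ⟨j, h⟩) = x j := by
  simp [blockRestrict, LinearMap.funLeft_apply]

theorem blockRestrict_blockEmbed (v : Fin B.card → ℝ) : blockRestrict B (blockEmbed B v) = v := by
  funext t
  obtain ⟨⟨j, h⟩, rfl⟩ := B.equivFin.surjective t
  rw [blockRestrict_apply_equivFin _ h, blockEmbed_apply_of_mem _ h]

theorem blockEmbed_blockRestrict_apply_of_mem (x : Fin d → ℝ) {j : Fin d} (h : j ∈ B) :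
    blockEmbed B (blockRestrict B x) j = x j := by
  rw [blockEmbed_apply_of_mem _ h, blockRestrict_apply_equivFin _ h]

theorem blockEmbed_blockRestrict_of_support {x : Fin d → ℝ} (hx : ∀ j ∉ B, x j = 0) :
    blockEmbed B (blockRestrict B x) = x := by
  funext j
  by_cases h : j ∈ B
  · exact blockEmbed_blockRestrict_apply_of_mem x h
  · rw [blockEmbed_apply_of_notMem _ h, hx j h]

theorem blockRestrict_eq_zero_of_support {x : Fin d → ℝ} (hx : ∀ j ∈ B, x j = 0) :
    blockRestrict B x = 0 :=
  funext fun t => hx _ (B.equivFin.symm t).2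

theorem apply_eq_zero_of_blockRestrict_eq_zero {x : Fin d → ℝ} (hx : blockRestrict B x = 0)
    {j : Fin d} (h : j ∈ B) : x j = 0 := by
  rw [← blockRestrict_apply_equivFin x h, hx, Pi.zero_apply]

theorem blockRestrict_blockEmbed_of_disjoint {B' : Finset (Fin d)} (hBB' : Disjoint B B')
    (v : Fin B'.card → ℝ) : blockRestrict B (blockEmbed B' v) = 0 :=
  blockRestrict_eq_zero_of_support fun _ h =>
    blockEmbed_apply_of_notMem _ (hBB'.notMem_of_mem_left_finset h)

theorem blockRestrict_mem_intLat {x : Fin d → ℝ} (hx : x ∈ intLat d) :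
    blockRestrict B x ∈ intLat B.card := fun _ => hx _

theorem blockEmbed_mem_intLat {v : Fin B.card → ℝ} (hv : v ∈ intLat B.card) :
    blockEmbed B v ∈ intLat d := fun j => by
  by_cases h : j ∈ B
  · rw [blockEmbed_apply_of_mem _ h]; exact hv _
  · rw [blockEmbed_apply_of_notMem _ h]; exact ⟨0, by simp⟩

theorem blockEmbed_single (t : Fin B.card) :
    blockEmbed B (Pi.single t 1) = Pi.single (B.equivFin.symm t : Fin d) 1 := by
  funext j
  by_cases h : j ∈ B
  · rw [blockEmbed_apply_of_mem _ h, Pi.single_apply, Pi.single_apply]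
    exact if_congr (by rw [← Equiv.eq_symm_apply, ← Subtype.coe_inj]) rfl rfl
  · rw [blockEmbed_apply_of_notMem _ h, Pi.single_apply, if_neg]
    rintro rfl
    exact h (B.equivFin.symm t).2

theorem blockEmbed_neg_one : blockEmbed B (fun _ => -1) = -∑ j ∈ B, Pi.single j 1 := by
  funext j
  by_cases h : j ∈ B
  · simp [blockEmbed_apply_of_mem _ h, Finset.sum_apply, Pi.single_apply, h]
  · simp [blockEmbed_apply_of_notMem _ h, Finset.sum_apply, Pi.single_apply, h]

theorem blockTerminal_eq_image (B : Finset (Fin d)) (w : Fin d → ℝ) :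
    blockTerminal B w = (fun v => w + blockEmbed B v) '' stdTerminal B.card := by
  let f : (Fin B.card → ℝ) →ᵃ[ℝ] (Fin d → ℝ) :=
    (AffineEquiv.constVAdd ℝ (Fin d → ℝ) w).toAffineMap.comp (blockEmbed B).toAffineMap
  change _ = f '' _
  rw [stdTerminal, f.image_convexHull, blockTerminal, Set.image_insert_eq, ← Set.range_comp]
  congr 2
  · change w - _ = w + blockEmbed B (fun _ => -1)
    rw [blockEmbed_neg_one, sub_eq_add_neg]
  · ext x
    simp only [Set.mem_image, Set.mem_range, Function.comp_apply, Finset.mem_coe]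
    constructor
    · rintro ⟨j, hj, rfl⟩
      refine ⟨B.equivFin ⟨j, hj⟩, ?_⟩
      change w + blockEmbed B _ = _
      rw [blockEmbed_single, Equiv.symm_apply_apply]
    · rintro ⟨t, rfl⟩
      refine ⟨_, (B.equivFin.symm t).2, ?_⟩
      change _ = w + blockEmbed B _
      rw [blockEmbed_single]

theorem mem_blockTerminal {w x : Fin d → ℝ} :
    x ∈ blockTerminal B w ↔ ∃ v ∈ stdTerminal B.card, w + blockEmbed B v = x := by
  rw [blockTerminal_eq_image, Set.mem_image]

theorem apply_eq_zero_of_mem_blockTerminal {w x : Fin d → ℝ} (hw : ∀ j ∉ B, w j = 0)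
    (hx : x ∈ blockTerminal B w) {j : Fin d} (hj : j ∉ B) : x j = 0 := by
  obtain ⟨v, -, rfl⟩ := mem_blockTerminal.1 hx
  simp [hw j hj, blockEmbed_apply_of_notMem _ hj]

theorem image_blockRestrict_blockTerminal (w : Fin d → ℝ) :
    blockRestrict B '' blockTerminal B w = blockRestrict B w +ᵥ stdTerminal B.card := by
  rw [blockTerminal_eq_image, Set.image_image, ← Set.image_vadd]
  simp only [map_add, blockRestrict_blockEmbed, vadd_eq_add]

section Partition

variable {k : ℕ} {B : Fin k → Finset (Fin d)}

theorem sum_card_eq_of_partition (hcov : ∀ j, ∃ b, j ∈ B b)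
    (hdis : ∀ b b', b ≠ b' → Disjoint (B b) (B b')) : ∑ b, (B b).card = d := by
  rw [← Finset.card_biUnion fun b _ b' _ h => hdis b b' h, Finset.eq_univ_of_forall fun j =>
    Finset.mem_biUnion.2 ((hcov j).imp fun b hb => ⟨Finset.mem_univ b, hb⟩)]
  exact Finset.card_fin d

theorem sum_blockEmbed_blockRestrict (hcov : ∀ j, ∃ b, j ∈ B b)
    (hdis : ∀ b b', b ≠ b' → Disjoint (B b) (B b')) (x : Fin d → ℝ) :
    ∑ b, blockEmbed (B b) (blockRestrict (B b) x) = x := by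
  funext j
  obtain ⟨b₀, hb₀⟩ := hcov j
  rw [Finset.sum_apply, Finset.sum_eq_single b₀ _ (fun h => absurd (Finset.mem_univ b₀) h)]
  · exact blockEmbed_blockRestrict_apply_of_mem x hb₀
  · exact fun b _ hb => blockEmbed_apply_of_notMem _ ((hdis b b₀ hb).notMem_of_mem_right_finset hb₀)

theorem blockRestrict_sum_blockEmbed (hdis : ∀ b b', b ≠ b' → Disjoint (B b) (B b'))
    (g : ∀ b, Fin (B b).card → ℝ) (b : Fin k) :
    blockRestrict (B b) (∑ b', blockEmbed (B b') (g b')) = g b := by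
  rw [map_sum, Finset.sum_eq_single b _ (fun h => absurd (Finset.mem_univ b) h),
    blockRestrict_blockEmbed]
  exact fun b' _ hb' => blockRestrict_blockEmbed_of_disjoint (hdis b b' hb'.symm) _

end Partition

end BlockCoordinates

theorem Submodule.finrank_map_add_finrank_inf_ker {K V V₂ : Type*} [DivisionRing K]
    [AddCommGroup V] [Module K V] [AddCommGroup V₂] [Module K V₂] [FiniteDimensional K V]
    (W : Submodule K V) (f : V →ₗ[K] V₂) :
    Module.finrank K (W.map f) + Module.finrank K (W ⊓ LinearMap.ker f : Submodule K V) =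
      Module.finrank K W := by
  have h := (f.domRestrict W).finrank_range_add_finrank_ker
  rw [LinearMap.range_domRestrict, LinearMap.ker_domRestrict] at h
  rwa [← (Submodule.comapSubtypeEquivOfLe (inf_le_left : W ⊓ LinearMap.ker f ≤ W)).finrank_eq,
    Submodule.comap_inf, Submodule.comap_subtype_self, top_inf_eq]

theorem Submodule.finrank_le_card_of_forall_apply_eq_zero {K ι : Type*} [Field K] [Fintype ι]
    (A : Finset ι) (W : Submodule K (ι → K)) (h : ∀ x ∈ W, ∀ j ∉ A, x j = 0) :
    Module.finrank K W ≤ A.card := by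
  let f := LinearMap.funLeft K K (Subtype.val : A → ι) ∘ₗ W.subtype
  have hf : Function.Injective f := fun x y hxy => Subtype.ext <| funext fun j => by
    by_cases hj : j ∈ A
    · exact congrFun hxy ⟨j, hj⟩
    · rw [h x x.2 j hj, h y y.2 j hj]
  simpa using LinearMap.finrank_le_finrank_of_injective hf

section StandardTerminal

variable {n : ℕ}

theorem neg_one_mem_stdTerminal : (fun _ => -1) ∈ stdTerminal n :=
  subset_convexHull ℝ _ (Set.mem_insert _ _)

theorem exists_mem_covMinSet_stdTerminal_lt
    (hH : ∀ s, 1 ≤ s → s ≤ n → covMin s (stdTerminal n) (intLat n) = (s : ℝ) / 2)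
    {s : ℕ} (hs : s ≤ n) {ε : ℝ} (hε : 0 < ε) :
    ∃ μ ∈ covMinSet s (stdTerminal n) (intLat n), μ < (s : ℝ) / 2 + ε := by
  rcases Nat.eq_zero_or_pos s with rfl | hs1
  · exact ⟨0, zero_mem_covMinSet_zero ⟨_, neg_one_mem_stdTerminal⟩
      (intLatAddSubgroup n).zero_mem, by simpa using hε⟩
  · exact exists_mem_covMinSet_lt (hH s hs1 hs) (by positivity) hε

theorem exists_affineSubspace_disjoint_smul_vadd_stdTerminal
    (hH : ∀ s, 1 ≤ s → s ≤ n → covMin s (stdTerminal n) (intLat n) = (s : ℝ) / 2)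
    {s : ℕ} (hs : s ≤ n) {μ : ℝ} (hμ0 : 0 ≤ μ) (hμ : 1 ≤ s → μ < (s : ℝ) / 2) (a : Fin n → ℝ) :
    ∃ V : AffineSubspace ℝ (Fin n → ℝ), (V : Set (Fin n → ℝ)).Nonempty ∧
      Module.finrank ℝ V.direction = n - s ∧
      (1 ≤ s → ∀ x ∈ μ • (a +ᵥ stdTerminal n) + intLat n, x ∉ V) := by
  rcases Nat.eq_zero_or_pos s with rfl | hs1
  · refine ⟨⊤, ⟨0, trivial⟩, ?_, by omega⟩
    rw [AffineSubspace.direction_top, finrank_top, Module.finrank_fin_fun, Nat.sub_zero]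
  obtain ⟨V, hV, hrank, hdisj⟩ :=
    exists_affineSubspace_of_lt_covMin hμ0 ((hH s hs1 hs).symm ▸ hμ hs1)
  refine ⟨(μ • a) +ᵥ V, hV.vadd_set,
    by rw [AffineSubspace.pointwise_vadd_direction, hrank, Module.finrank_fin_fun], fun _ => ?_⟩
  rintro _ ⟨_, ⟨_, ⟨t, ht, rfl⟩, rfl⟩, z, hz, rfl⟩ hmem
  change μ • (a + t) + z ∈ _ at hmem
  rw [smul_add, add_assoc, ← vadd_eq_add,
    AffineSubspace.vadd_mem_pointwise_vadd_iff] at hmem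
  exact hdisj.notMem_of_mem_left ⟨μ • t, Set.smul_mem_smul_set ht, z, hz, rfl⟩ hmem

end StandardTerminal

section UpperBound

variable {d : ℕ}

theorem exists_mem_blockEmbed_blockRestrict_mem {B : Finset (Fin d)} {w : Fin d → ℝ}
    (hw : ∀ j ∉ B, w j = 0) {s : ℕ} {μ : ℝ}
    (hμ : μ ∈ covMinSet s (stdTerminal B.card) (intLat B.card))
    {U : AffineSubspace ℝ (Fin d → ℝ)} (hU : (U : Set (Fin d → ℝ)).Nonempty)
    (hrank : Module.finrank ℝ (U.direction.map (blockRestrict B)) + s = B.card) :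
    ∃ p ∈ U, blockEmbed B (blockRestrict B p) ∈ μ • blockTerminal B w + intLat d := by
  obtain ⟨q, hq⟩ := hU
  set ρ := blockRestrict B
  -- shifting the projection of `U` by `-μ • ρ w` trades `μ • (ρ w + T_{|B|})` for `μ • T_{|B|}`
  let Q : AffineSubspace ℝ (Fin B.card → ℝ) :=
    AffineSubspace.mk' (ρ q - μ • ρ w) (U.direction.map ρ)
  have hQrank : Module.finrank ℝ Q.direction = Module.finrank ℝ (Fin B.card → ℝ) - s := by
    rw [AffineSubspace.direction_mk', Module.finrank_fin_fun]
    omega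
  obtain ⟨_, ⟨_, ⟨t, ht, rfl⟩, z, hz, rfl⟩, hQ⟩ :=
    hμ.2 Q ⟨_, AffineSubspace.self_mem_mk' _ _⟩ hQrank
  obtain ⟨v, hv, hρv⟩ := AffineSubspace.mem_mk'.1 hQ
  refine ⟨v +ᵥ q, AffineSubspace.vadd_mem_of_mem_direction hv hq, μ • (w + blockEmbed B t),
    Set.smul_mem_smul_set (mem_blockTerminal.2 ⟨t, ht, rfl⟩), blockEmbed B z,
    blockEmbed_mem_intLat hz, ?_⟩
  have hρp : ρ (v +ᵥ q) = μ • (ρ w + t) + z := by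
    rw [vadd_eq_add, map_add, hρv, vsub_eq_sub]
    module
  rw [hρp, map_add, map_smul, map_add, blockEmbed_blockRestrict_of_support hw]

variable {k : ℕ} {B : Fin k → Finset (Fin d)} {K : Set (Fin d → ℝ)}

theorem apply_eq_zero_of_mem_inf_ker_blockRestrict {W : Submodule ℝ (Fin d → ℝ)} {b : Fin k}
    {t : Finset (Fin k)} (hW : ∀ x ∈ W, ∀ l ∉ (insert b t).biUnion B, x l = 0) {x : Fin d → ℝ}
    (hx : x ∈ W ⊓ LinearMap.ker (blockRestrict (B b))) {l : Fin d} (hl : l ∉ t.biUnion B) :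
    x l = 0 := by
  by_cases hlb : l ∈ B b
  · exact apply_eq_zero_of_blockRestrict_eq_zero hx.2 hlb
  · refine hW x hx.1 l ?_
    rw [Finset.biUnion_insert, Finset.mem_union]
    exact fun h => h.elim hlb hl

theorem exists_mem_sum_blockEmbed_blockRestrict_mem (hK : Convex ℝ K) (hK0 : (0 : Fin d → ℝ) ∈ K)
    {w : Fin k → Fin d → ℝ} (hw : ∀ b, ∀ j ∉ B b, w b j = 0)
    (hwK : ∀ b, blockTerminal (B b) (w b) ⊆ K)
    (hH : ∀ b, ∀ s, 1 ≤ s → s ≤ (B b).card →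
      covMin s (stdTerminal (B b).card) (intLat (B b).card) = (s : ℝ) / 2)
    (t : Finset (Fin k)) :
    ∀ (j : ℕ) (ε : ℝ), 0 < ε → ∀ U : AffineSubspace ℝ (Fin d → ℝ),
      (U : Set (Fin d → ℝ)).Nonempty → (∀ x ∈ U.direction, ∀ l ∉ t.biUnion B, x l = 0) →
      Module.finrank ℝ U.direction + j = ∑ b ∈ t, (B b).card →
      ∃ p ∈ U, ∑ b ∈ t, blockEmbed (B b) (blockRestrict (B b) p) ∈
        ((j : ℝ) / 2 + ε) • K + intLat d := by
  classical
  induction t using Finset.induction_on with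
  | empty =>
    intro j ε hε U ⟨q, hq⟩ _ _
    refine ⟨q, hq, 0, ?_, 0, (intLatAddSubgroup d).zero_mem, by simp⟩
    simpa using Set.smul_mem_smul_set (a := (j : ℝ) / 2 + ε) hK0
  | insert b t hb ih =>
    intro j ε hε U hU hsupp hrank
    set ρ := blockRestrict (B b)
    set r := Module.finrank ℝ (U.direction.map ρ)
    have hr : r ≤ (B b).card := (Submodule.finrank_le _).trans (Module.finrank_fin_fun ℝ).le
    obtain ⟨μ, hμ, hμlt⟩ :=
      exists_mem_covMinSet_stdTerminal_lt (hH b) (Nat.sub_le _ r) (half_pos hε)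
    obtain ⟨p₀, hp₀, hp₀mem⟩ :=
      exists_mem_blockEmbed_blockRestrict_mem (hw b) hμ hU (Nat.add_sub_cancel' hr)
    set D := U.direction ⊓ LinearMap.ker ρ
    have hDsupp : ∀ x ∈ D, ∀ l ∉ t.biUnion B, x l = 0 := fun x hx l hl =>
      apply_eq_zero_of_mem_inf_ker_blockRestrict hsupp hx hl
    have hDrank : r + Module.finrank ℝ D = Module.finrank ℝ U.direction :=
      U.direction.finrank_map_add_finrank_inf_ker ρ
    have hDle : Module.finrank ℝ D ≤ ∑ b ∈ t, (B b).card :=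
      (D.finrank_le_card_of_forall_apply_eq_zero _ hDsupp).trans Finset.card_biUnion_le
    rw [Finset.sum_insert hb] at hrank
    obtain ⟨p, hp, hpmem⟩ := ih (∑ b ∈ t, (B b).card - Module.finrank ℝ D) (ε / 2)
      (half_pos hε) (AffineSubspace.mk' p₀ D) ⟨p₀, AffineSubspace.self_mem_mk' _ _⟩
      (by rwa [AffineSubspace.direction_mk']) (by rw [AffineSubspace.direction_mk']; omega)
    obtain ⟨hpU, hpker⟩ := AffineSubspace.mem_mk'.1 hp
    have hρp : ρ p = ρ p₀ := sub_eq_zero.1 (by rw [← map_sub]; exact hpker)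
    refine ⟨p, by simpa using AffineSubspace.vadd_mem_of_mem_direction hpU hp₀, ?_⟩
    have hsplit : (j : ℝ) / 2 + ε = ((((B b).card - r : ℕ) : ℝ) / 2 + ε / 2) +
        (((∑ b ∈ t, (B b).card - Module.finrank ℝ D : ℕ) : ℝ) / 2 + ε / 2) := by
      have : ((B b).card - r) + (∑ b ∈ t, (B b).card - Module.finrank ℝ D) = j := by omega
      rw [← this]
      push_cast
      ring
    rw [Finset.sum_insert hb, hρp, hsplit]
    refine hK.add_mem_smul_add (L := (intLatAddSubgroup d).toAddSubmonoid)
      (by positivity) (by positivity) ?_ hpmem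
    refine Set.add_subset_add_right (hK.smul_set_subset_smul_set hK0 hμ.1 hμlt.le) ?_
    exact Set.add_subset_add_right (Set.smul_set_mono (hwK b)) hp₀mem

end UpperBound

theorem Finset.exists_le_sum_eq {ι : Type*} (s : Finset ι) (n : ι → ℕ) {i : ℕ}
    (hi : i ≤ ∑ b ∈ s, n b) : ∃ f : ι → ℕ, (∀ b, f b ≤ n b) ∧ ∑ b ∈ s, f b = i := by
  classical
  induction s using Finset.induction_on generalizing i with
  | empty => exact ⟨0, fun _ => Nat.zero_le _, by simpa using (hi.antisymm (Nat.zero_le _)).symm⟩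
  | insert a s ha ih =>
    rw [Finset.sum_insert ha] at hi
    obtain ⟨f, hf, hfs⟩ := ih (i := i - min (n a) i) (by omega)
    refine ⟨Function.update f a (min (n a) i), fun b => ?_, ?_⟩
    · rcases eq_or_ne b a with rfl | hb
      · simp
      · simpa [hb] using hf b
    · rw [Finset.sum_insert ha, Function.update_self,
        Finset.sum_congr rfl fun b hb => Function.update_of_ne (ne_of_mem_of_not_mem hb ha) _ f,
        hfs]
      omega

theorem exists_lt_half_of_sum_eq {ι : Type*} [Fintype ι] (m : ι → ℕ) {μ : ℝ} (hμ0 : 0 ≤ μ)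
    (hμ : μ < ((∑ b, m b : ℕ) : ℝ) / 2) :
    ∃ ν : ι → ℝ, (∀ b, 0 ≤ ν b) ∧ (∀ b, m b = 0 → ν b = 0) ∧
      (∀ b, 1 ≤ m b → ν b < m b / 2) ∧ ∑ b, ν b = μ := by
  set M : ℝ := ((∑ b, m b : ℕ) : ℝ)
  have hM : 0 < M := by linarith
  have hμM : μ / M < 1 / 2 := by rw [div_lt_iff₀ hM]; linarith
  refine ⟨fun b => m b * (μ / M), fun b => by positivity, fun b hb => by simp [hb],
    fun b hb => ?_, ?_⟩
  · have hb' : (0 : ℝ) < m b := by exact_mod_cast hb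
    linarith [mul_lt_mul_of_pos_left hμM hb']
  · rw [← Finset.sum_mul, ← Nat.cast_sum]
    exact mul_div_cancel₀ μ hM.ne'

section LowerBound

variable {d k : ℕ} {B : Fin k → Finset (Fin d)}

theorem exists_affineSubspace_forall_blockRestrict_mem
    (hdis : ∀ b b', b ≠ b' → Disjoint (B b) (B b'))
    (V : ∀ b, AffineSubspace ℝ (Fin (B b).card → ℝ))
    (hV : ∀ b, (V b : Set (Fin (B b).card → ℝ)).Nonempty) :
    ∃ Q : AffineSubspace ℝ (Fin d → ℝ), (Q : Set (Fin d → ℝ)).Nonempty ∧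
      Module.finrank ℝ Q.direction = ∑ b, Module.finrank ℝ (V b).direction ∧
      ∀ x ∈ Q, ∀ b, blockRestrict (B b) x ∈ V b := by
  choose q hq using hV
  let ι : (∀ b, (V b).direction) →ₗ[ℝ] (Fin d → ℝ) :=
    ∑ b, blockEmbed (B b) ∘ₗ (V b).direction.subtype ∘ₗ LinearMap.proj b
  have hρι : ∀ y b, blockRestrict (B b) (ι y) = y b := fun y b => by
    simpa [ι] using blockRestrict_sum_blockEmbed hdis (fun b => (y b : Fin (B b).card → ℝ)) b
  have hι : Function.Injective ι := fun y y' h =>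
    funext fun b => Subtype.ext <| by rw [← hρι y b, ← hρι y' b, h]
  refine ⟨AffineSubspace.mk' (∑ b, blockEmbed (B b) (q b)) (LinearMap.range ι),
    ⟨_, AffineSubspace.self_mem_mk' _ _⟩, ?_, fun x hx b => ?_⟩
  · rw [AffineSubspace.direction_mk', LinearMap.finrank_range_of_inj hι,
      Module.finrank_pi_fintype]
  · obtain ⟨y, hy⟩ := AffineSubspace.mem_mk'.1 hx
    have hx' : blockRestrict (B b) x = (y b : Fin (B b).card → ℝ) + q b := by
      rw [← hρι, hy, vsub_eq_sub, map_sub, blockRestrict_sum_blockEmbed hdis,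
        sub_add_cancel]
    rw [hx']
    exact AffineSubspace.vadd_mem_of_mem_direction (y b).2 (hq b)

theorem exists_blockRestrict_mem_smul (hdis : ∀ b b', b ≠ b' → Disjoint (B b) (B b'))
    {w : Fin k → Fin d → ℝ} (hw : ∀ b, ∀ j ∉ B b, w b j = 0) {μ : ℝ} (hμ : 0 ≤ μ)
    {y : Fin d → ℝ} (hy : y ∈ μ • convexHull ℝ (⋃ b, blockTerminal (B b) (w b))) :
    ∃ c : Fin k → ℝ, (∀ b, 0 ≤ c b) ∧ ∑ b, c b = μ ∧
      ∀ b, blockRestrict (B b) y ∈ c b • blockRestrict (B b) '' blockTerminal (B b) (w b) := by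
  obtain ⟨x, hx, rfl⟩ := hy
  obtain ⟨c, hc0, hc1, z, hz, rfl⟩ := exists_sum_smul_of_mem_convexHull_iUnion
    (fun b => convex_convexHull ℝ _)
    (fun b => ⟨_, mem_blockTerminal.2 ⟨_, neg_one_mem_stdTerminal, rfl⟩⟩) hx
  refine ⟨fun b => μ * c b, fun b => mul_nonneg hμ (hc0 b), by rw [← Finset.mul_sum, hc1, mul_one],
    fun b => ?_⟩
  have hρz : blockRestrict (B b) (∑ b', c b' • z b') = c b • blockRestrict (B b) (z b) := by
    rw [map_sum, Finset.sum_eq_single b _ (fun h => absurd (Finset.mem_univ b) h), map_smul]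
    refine fun b' _ hb' => by
      rw [map_smul, blockRestrict_eq_zero_of_support fun j hj =>
        apply_eq_zero_of_mem_blockTerminal (hw b') (hz b')
          ((hdis b b' hb'.symm).notMem_of_mem_left_finset hj), smul_zero]
  rw [map_smul, hρz, smul_smul]
  exact Set.smul_mem_smul_set (Set.mem_image_of_mem _ (hz b))

end LowerBound

section TerminalPolytope

variable {d k : ℕ} {B : Fin k → Finset (Fin d)} {w : Fin k → Fin d → ℝ}

theorem add_mem_covMinSet_convexHull_blockTerminal (hcov : ∀ j, ∃ b, j ∈ B b)
    (hdis : ∀ b b', b ≠ b' → Disjoint (B b) (B b')) (hw : ∀ b, ∀ j ∉ B b, w b j = 0)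
    (h0 : ∀ b, (0 : Fin d → ℝ) ∈ blockTerminal (B b) (w b))
    (hH : ∀ b, ∀ s, 1 ≤ s → s ≤ (B b).card →
      covMin s (stdTerminal (B b).card) (intLat (B b).card) = (s : ℝ) / 2)
    (hd : 0 < d) {i : ℕ} (hid : i ≤ d) {ε : ℝ} (hε : 0 < ε) :
    (i : ℝ) / 2 + ε ∈ covMinSet i (convexHull ℝ (⋃ b, blockTerminal (B b) (w b))) (intLat d) := by
  have hS : ∀ b, blockTerminal (B b) (w b) ⊆ convexHull ℝ (⋃ b, blockTerminal (B b) (w b)) :=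
    fun b => (Set.subset_iUnion (fun b => blockTerminal (B b) (w b)) b).trans
      (subset_convexHull ℝ _)
  obtain ⟨b₀, -⟩ := hcov ⟨0, hd⟩
  refine ⟨by positivity, fun U hU hrank => ?_⟩
  rw [Module.finrank_fin_fun] at hrank
  obtain ⟨p, hpU, hp⟩ := exists_mem_sum_blockEmbed_blockRestrict_mem (convex_convexHull ℝ _)
    (hS b₀ (h0 b₀)) hw hS hH Finset.univ i ε hε U hU
    (fun _ _ l hl => absurd ((hcov l).elim fun b hb => Finset.mem_biUnion.2 ⟨b, by simp, hb⟩) hl)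
    (by rw [sum_card_eq_of_partition hcov hdis]; omega)
  rw [sum_blockEmbed_blockRestrict hcov hdis] at hp
  exact ⟨p, hp, hpU⟩

theorem le_of_mem_covMinSet_convexHull_blockTerminal (hcov : ∀ j, ∃ b, j ∈ B b)
    (hdis : ∀ b b', b ≠ b' → Disjoint (B b) (B b')) (hw : ∀ b, ∀ j ∉ B b, w b j = 0)
    (h0 : ∀ b, (0 : Fin d → ℝ) ∈ blockTerminal (B b) (w b))
    (hH : ∀ b, ∀ s, 1 ≤ s → s ≤ (B b).card →
      covMin s (stdTerminal (B b).card) (intLat (B b).card) = (s : ℝ) / 2)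
    {i : ℕ} (hi : 1 ≤ i) (hid : i ≤ d) {μ : ℝ}
    (hμ : μ ∈ covMinSet i (convexHull ℝ (⋃ b, blockTerminal (B b) (w b))) (intLat d)) :
    (i : ℝ) / 2 ≤ μ := by
  by_contra! hlt
  have hcard := sum_card_eq_of_partition hcov hdis
  obtain ⟨is, his, hsum⟩ := Finset.univ.exists_le_sum_eq (fun b => (B b).card) (hcard ▸ hid)
  obtain ⟨μb, hμb0, hμb_zero, hμb, hsumμb⟩ :=
    exists_lt_half_of_sum_eq is hμ.1 (by rwa [hsum])
  choose V hVne hVrank hVdisj using fun b =>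
    exists_affineSubspace_disjoint_smul_vadd_stdTerminal (hH b) (his b) (hμb0 b) (hμb b)
      (blockRestrict (B b) (w b))
  obtain ⟨Q, hQne, hQrank, hQ⟩ := exists_affineSubspace_forall_blockRestrict_mem hdis V hVne
  have hQrank' : Module.finrank ℝ Q.direction = Module.finrank ℝ (Fin d → ℝ) - i := by
    rw [hQrank, Module.finrank_fin_fun, Finset.sum_congr rfl fun b _ => hVrank b,
      Finset.sum_tsub_distrib _ fun b _ => his b, hcard, hsum]
  obtain ⟨_, ⟨y, hy, z, hz, rfl⟩, hyzQ⟩ := hμ.2 Q hQne hQrank'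
  obtain ⟨c, hc0, hcsum, hcmem⟩ := exists_blockRestrict_mem_smul hdis hw hμ.1 hy
  obtain ⟨b, hb, hcb⟩ : ∃ b, 1 ≤ is b ∧ c b ≤ μb b := by
    by_contra! hgt
    have hle : ∀ b ∈ Finset.univ, μb b ≤ c b := fun b _ =>
      (Nat.eq_zero_or_pos (is b)).elim (fun h => (hμb_zero b h).trans_le (hc0 b))
        (fun h => (hgt b h).le)
    obtain ⟨b₀, -, hb₀⟩ := Finset.exists_ne_zero_of_sum_ne_zero (hsum ▸ (by omega : i ≠ 0))
    linarith [Finset.sum_lt_sum hle ⟨b₀, Finset.mem_univ _, hgt b₀ (by omega)⟩]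
  have hSb : Convex ℝ (blockRestrict (B b) '' blockTerminal (B b) (w b)) :=
    (convex_convexHull ℝ _).linear_image _
  refine hVdisj b hb (blockRestrict (B b) (y + z)) ?_ (hQ _ hyzQ b)
  rw [map_add, ← image_blockRestrict_blockTerminal]
  exact Set.add_mem_add (hSb.smul_set_subset_smul_set ⟨0, h0 b, map_zero _⟩ (hc0 b) hcb (hcmem b))
    (blockRestrict_mem_intLat hz)

end TerminalPolytope

/-- **Corollary.** If `μ_s(T_n) = s/2` for every `n ≤ d` and `s ∈ {1,…,n}`, then every
terminal `d`-polytope `T` satisfies `μ_i(T) = i/2` for all `i ∈ {1,…,d}`. -/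
theorem covMin_terminalPolytope
    (d : ℕ) (T : Set (Fin d → ℝ)) (hT : IsTerminalPolytope T)
    (H : ∀ n : ℕ, 1 ≤ n → n ≤ d → ∀ s : ℕ, 1 ≤ s → s ≤ n →
      covMin s (stdTerminal n) (intLat n) = (s : ℝ) / 2) :
    ∀ i : ℕ, 1 ≤ i → i ≤ d → covMin i T (intLat d) = (i : ℝ) / 2 := by
  obtain ⟨k, B, u, -, hcov, hdis, hu0, h0, rfl⟩ := hT
  intro i hi hid
  have hw : ∀ b, ∀ j ∉ B b, (u b j : ℝ) = 0 := fun b j hj => by simp [hu0 b j hj]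
  have hH : ∀ b, ∀ s, 1 ≤ s → s ≤ (B b).card →
      covMin s (stdTerminal (B b).card) (intLat (B b).card) = (s : ℝ) / 2 :=
    fun b s hs hsn => H _ (hs.trans hsn) ((B b).card_le_univ.trans_eq (Fintype.card_fin d)) s hs hsn
  exact covMin_eq_of_forall_add_mem_of_forall_le
    (fun ε hε => add_mem_covMinSet_convexHull_blockTerminal hcov hdis hw h0 hH (by omega) hid hε)
    (fun μ hμ => le_of_mem_covMinSet_convexHull_blockTerminal hcov hdis hw h0 hH hi hid hμ)
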